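/- arXiv:2010.11748 — 4 statements merged into one kernel-verified Lean document; each statement's English description precedes it below -/
import Mathlib

section
/- (Theorem 1, forward direction.) Let c ∈ (0, 1/2), K ≥ 2, and let φ : ℝ → ℝ be a classification-calibrated margin loss. Then for every class-posterior vector η ∈ ℝ^K and every g* ∈ ℝ^K that minimizes W(·; η) over ℝ^K, the decision rule induced by g* attains the minimal conditional zero-one-c risk min(c, 1 − max_y η_y) at η; in particular, it coincides with Chow's rule at every η with max_y η_y ≠ 1 − c. -/
open Classical

/-- The maximum of a function on `Fin K` (for `K > 0`). -/
noncomputable def vmax {K : ℕ} (hK : 0 < K) (f : Fin K → ℝ) : ℝ :=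
  Finset.univ.sup' ⟨⟨0, hK⟩, Finset.mem_univ _⟩ f

/-- The conditional zero-one-c risk of a decision (`none` = rejection ®,
`some y` = predicting class `y`) at a class-posterior vector `η`. -/
def drisk {K : ℕ} (c : ℝ) (η : Fin K → ℝ) : Option (Fin K) → ℝ
  | none => c
  | some y => 1 - η y

/-- The cost-sensitive surrogate loss `L_CS^φ(g, y) = c·φ(g_y) + (1−c)·∑_{y'≠y} φ(−g_{y'})`. -/
noncomputable def LCS {K : ℕ} (φ : ℝ → ℝ) (c : ℝ) (g : Fin K → ℝ) (y : Fin K) : ℝ :=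
  c * φ (g y) + (1 - c) * ∑ y' ∈ Finset.univ.erase y, φ (-(g y'))

/-- The pointwise conditional surrogate risk `W(g; η) = ∑_y η_y · L_CS^φ(g, y)`. -/
noncomputable def Wrisk {K : ℕ} (φ : ℝ → ℝ) (c : ℝ) (g η : Fin K → ℝ) : ℝ :=
  ∑ y, η y * LCS φ c g y

/-- The decision rule induced by a score vector `g`: reject (`none`) if
`max_y g_y ≤ 0` or if two distinct coordinates of `g` are strictly positive,
otherwise output the unique class `y` with `g_y > 0`. -/
noncomputable def decRule {K : ℕ} (g : Fin K → ℝ) : Option (Fin K) :=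
  if h : ∃! y, 0 < g y then some h.choose else none

/-- A margin loss `φ` is classification-calibrated if for every `η ∈ [0,1]` with
`η ≠ 1/2`, the infimum of the conditional `φ`-risk over `v` with `v·(2η−1) ≤ 0` is
strictly greater than the unrestricted infimum. -/
def ClassificationCalibrated (φ : ℝ → ℝ) : Prop :=
  ∀ η : ℝ, 0 ≤ η → η ≤ 1 → η ≠ 1/2 →
    sInf {r : ℝ | ∃ v : ℝ, v * (2 * η - 1) ≤ 0 ∧ r = η * φ v + (1 - η) * φ (-v)} >
    sInf {r : ℝ | ∃ v : ℝ, r = η * φ v + (1 - η) * φ (-v)}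

/-!
`W(·; η)` separates into `K` binary margin risks, the `y`-th putting weight `c·η_y` on
`φ(g_y)` and `(1 − c)(1 − η_y)` on `φ(−g_y)`. Its normalized posterior exceeds `1/2` exactly
when `η_y > 1 − c`, so classification calibration forces each coordinate of a minimizer `g*`
to have the sign of `η_y − (1 − c)`. As `c < 1/2`, every class other than an argmax `y₀` has
`η_y ≤ 1/2 < 1 − c`, so `g*` is negative off `y₀` and the induced rule predicts `y₀` or
rejects according as `η_{y₀}` exceeds `1 − c` or not: this is Chow's rule, and at
`η_{y₀} = 1 − c` both decisions cost `c`.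
-/

def marginRisk (φ : ℝ → ℝ) (p q t : ℝ) : ℝ :=
  p * φ t + q * φ (-t)

lemma marginRisk_smul (φ : ℝ → ℝ) (a p q t : ℝ) :
    marginRisk φ (a * p) (a * q) t = a * marginRisk φ p q t := by
  unfold marginRisk
  ring

namespace ClassificationCalibrated

variable {φ : ℝ → ℝ}

lemma mul_pos_of_isMinimizer (hφ : ClassificationCalibrated φ) {η t : ℝ} (h0 : 0 ≤ η)
    (h1 : η ≤ 1) (hne : η ≠ 1 / 2)
    (ht : ∀ v, marginRisk φ η (1 - η) t ≤ marginRisk φ η (1 - η) v) :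
    0 < t * (2 * η - 1) := by
  by_contra! hsign
  have hbdd : BddBelow {r : ℝ | ∃ v : ℝ, v * (2 * η - 1) ≤ 0 ∧
      r = η * φ v + (1 - η) * φ (-v)} := ⟨_, by rintro _ ⟨v, -, rfl⟩; exact ht v⟩
  have hlow := csInf_le hbdd ⟨t, hsign, rfl⟩
  have hup : marginRisk φ η (1 - η) t ≤
      sInf {r : ℝ | ∃ v : ℝ, r = η * φ v + (1 - η) * φ (-v)} :=
    le_csInf ⟨_, t, rfl⟩ (by rintro _ ⟨v, rfl⟩; exact ht v)
  exact (hφ η h0 h1 hne).not_ge (hlow.trans hup)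

lemma mul_sub_pos_of_isMinimizer (hφ : ClassificationCalibrated φ) {p q t : ℝ} (hp : 0 ≤ p)
    (hq : 0 ≤ q) (hpq : p ≠ q) (ht : ∀ v, marginRisk φ p q t ≤ marginRisk φ p q v) :
    0 < t * (p - q) := by
  have hZ : 0 < p + q := lt_of_le_of_ne (add_nonneg hp hq) fun h => hpq (by linarith)
  set η := (p + q)⁻¹ * p with hη
  have hη' : 1 - η = (p + q)⁻¹ * q := by
    rw [hη]
    field_simp
    ring
  have key : 0 < t * (2 * η - 1) := by
    refine hφ.mul_pos_of_isMinimizer (by positivity) ?_ ?_ fun v => ?_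
    · rw [hη, inv_mul_le_one₀ hZ]
      linarith
    · rw [hη]
      intro h
      field_simp at h
      exact hpq (by linarith)
    · rw [hη', marginRisk_smul, marginRisk_smul]
      exact mul_le_mul_of_nonneg_left (ht v) (by positivity)
  have h2η : 2 * η - 1 = (p + q)⁻¹ * (p - q) := by
    rw [hη]
    field_simp
    ring
  rw [h2η, mul_left_comm] at key
  exact pos_of_mul_pos_right key (by positivity)

end ClassificationCalibrated

lemma apply_le_apply_of_forall_sum_le {ι α M : Type*} [Fintype ι] [DecidableEq ι]
    [AddCommMonoid M] [PartialOrder M] [IsOrderedCancelAddMonoid M] {f : ι → α → M}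
    {x : ι → α} (h : ∀ g : ι → α, ∑ i, f i (x i) ≤ ∑ i, f i (g i)) (i : ι) (v : α) :
    f i (x i) ≤ f i v := by
  have hi := h (Function.update x i v)
  simp only [Function.apply_update f x i v] at hi
  rwa [Finset.sum_update_of_mem (Finset.mem_univ i),
    Finset.sum_eq_add_sum_sdiff_singleton_of_mem (Finset.mem_univ i), add_le_add_iff_right] at hi

lemma Wrisk_eq_sum_marginRisk {K : ℕ} (φ : ℝ → ℝ) (c : ℝ) (g η : Fin K → ℝ)
    (hη1 : ∑ y, η y = 1) :
    Wrisk φ c g η = ∑ y, marginRisk φ (c * η y) ((1 - c) * (1 - η y)) (g y) := by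
  simp only [Wrisk, LCS, marginRisk, Finset.sum_erase_eq_sub (Finset.mem_univ _)]
  set S := ∑ y, φ (-g y)
  calc ∑ y, η y * (c * φ (g y) + (1 - c) * (S - φ (-g y)))
      = ∑ y, (c * η y * φ (g y) - (1 - c) * η y * φ (-g y)) + (1 - c) * S * ∑ y, η y := by
        rw [Finset.mul_sum, ← Finset.sum_add_distrib]
        exact Finset.sum_congr rfl fun y _ => by ring
    _ = ∑ y, (c * η y * φ (g y) + (1 - c) * (1 - η y) * φ (-g y)) := by
        rw [hη1, mul_one, Finset.mul_sum, ← Finset.sum_add_distrib]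
        exact Finset.sum_congr rfl fun y _ => by ring

lemma decRule_eq_ite {K : ℕ} {g : Fin K → ℝ} {y₀ : Fin K} (h : ∀ y, y ≠ y₀ → g y < 0) :
    decRule g = if 0 < g y₀ then some y₀ else none := by
  unfold decRule
  by_cases h₀ : 0 < g y₀
  · have huniq : ∃! y, 0 < g y :=
      ⟨y₀, h₀, fun y hy => by_contra fun hne => (h y hne).asymm hy⟩
    rw [dif_pos huniq, if_pos h₀, huniq.unique huniq.choose_spec.1 h₀]
  · have hnone : ¬∃! y, 0 < g y := by
      rintro ⟨y, hy, -⟩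
      rcases eq_or_ne y y₀ with rfl | hne
      · exact h₀ hy
      · exact (h y hne).asymm hy
    rw [dif_neg hnone, if_neg h₀]

section Posterior

variable {K : ℕ} {η : Fin K → ℝ}

lemma le_half_of_ne_of_forall_le (hη0 : ∀ y, 0 ≤ η y) (hη1 : ∑ y, η y = 1) {y₀ y : Fin K}
    (hmax : ∀ y, η y ≤ η y₀) (hy : y ≠ y₀) : η y ≤ 1 / 2 := by
  have hpair : η y + η y₀ ≤ 1 := by
    rw [← Finset.sum_pair hy, ← hη1]
    exact Finset.sum_le_univ_sum_of_nonneg hη0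
  linarith [hmax y]

lemma mul_sub_pos_of_isMinimizer_Wrisk {φ : ℝ → ℝ} (hφ : ClassificationCalibrated φ) {c : ℝ}
    (hc0 : 0 ≤ c) (hc1 : c ≤ 1) (hη0 : ∀ y, 0 ≤ η y) (hη1 : ∑ y, η y = 1) {g : Fin K → ℝ}
    (hmin : ∀ g', Wrisk φ c g η ≤ Wrisk φ c g' η) {y : Fin K} (hy : η y ≠ 1 - c) :
    0 < g y * (η y - (1 - c)) := by
  have hηy : η y ≤ 1 := hη1 ▸ Finset.single_le_sum (fun i _ => hη0 i) (Finset.mem_univ y)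
  have hcoord := apply_le_apply_of_forall_sum_le
    (f := fun y => marginRisk φ (c * η y) ((1 - c) * (1 - η y)))
    (by simpa only [Wrisk_eq_sum_marginRisk _ _ _ _ hη1] using hmin) y
  have key := hφ.mul_sub_pos_of_isMinimizer (mul_nonneg hc0 (hη0 y))
    (mul_nonneg (sub_nonneg.2 hc1) (sub_nonneg.2 hηy)) (fun h => hy (by linarith)) hcoord
  linarith [key, show c * η y - (1 - c) * (1 - η y) = η y - (1 - c) by ring]

end Posterior

/-- (Theorem 1, forward direction.) If `φ` is classification-calibrated, then for
every class-posterior vector `η` and every minimizer `g*` of the pointwise conditional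
surrogate risk `W(·; η)`, the decision rule induced by `g*` attains the minimal
conditional zero-one-c risk `min c (1 - max_y η_y)` at `η`; in particular it
coincides with Chow's rule at every `η` with `max_y η_y ≠ 1 - c`. -/
theorem stmt4 (c : ℝ) (hc0 : 0 < c) (hc : c < 1/2) (K : ℕ) (hK : 2 ≤ K)
    (φ : ℝ → ℝ) (hφ : ClassificationCalibrated φ)
    (η : Fin K → ℝ) (hη0 : ∀ y, 0 ≤ η y) (hη1 : ∑ y, η y = 1)
    (gstar : Fin K → ℝ) (hmin : ∀ g : Fin K → ℝ, Wrisk φ c gstar η ≤ Wrisk φ c g η) :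
    drisk c η (decRule gstar) = min c (1 - vmax (by omega) η) ∧
    (vmax (by omega) η ≠ 1 - c →
      ((vmax (by omega) η ≤ 1 - c → decRule gstar = none) ∧
       (1 - c < vmax (by omega) η →
          ∃ y : Fin K, decRule gstar = some y ∧ η y = vmax (by omega) η))) := by
  have hK₀ : 0 < K := by omega
  obtain ⟨y₀, -, hy₀⟩ := Finset.univ.exists_mem_eq_sup' ⟨⟨0, hK₀⟩, Finset.mem_univ _⟩ η
  have hmax : ∀ y, η y ≤ η y₀ := fun y => hy₀ ▸ Finset.le_sup' η (Finset.mem_univ y)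
  have hsign : ∀ y, η y ≠ 1 - c → 0 < gstar y * (η y - (1 - c)) := fun y =>
    mul_sub_pos_of_isMinimizer_Wrisk hφ hc0.le (by linarith) hη0 hη1 hmin
  have hdec : decRule gstar = if 0 < gstar y₀ then some y₀ else none := by
    refine decRule_eq_ite fun y hy => neg_of_mul_pos_left (hsign y ?_) ?_ <;>
      linarith [le_half_of_ne_of_forall_le hη0 hη1 hmax hy]
  rw [show vmax hK₀ η = η y₀ from hy₀, hdec]
  rcases lt_trichotomy (η y₀) (1 - c) with hlt | heq | hgt
  · have hneg : ¬0 < gstar y₀ := (neg_of_mul_pos_left (hsign y₀ hlt.ne) (by linarith)).asymm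
    rw [if_neg hneg, min_eq_left (by linarith)]
    exact ⟨rfl, fun _ => ⟨fun _ => rfl, fun h => absurd h hlt.not_gt⟩⟩
  · refine ⟨?_, fun hne => absurd heq hne⟩
    rw [min_eq_left (by linarith)]
    split_ifs
    · show 1 - η y₀ = c
      linarith
    · rfl
  · have hpos := pos_of_mul_pos_left (hsign y₀ hgt.ne') (by linarith)
    rw [if_pos hpos, min_eq_right (by linarith)]
    exact ⟨rfl, fun _ => ⟨fun h => absurd h hgt.not_ge, fun _ => ⟨y₀, rfl, rfl⟩⟩⟩
end

section
/- Let c ∈ (0, 1/2), K ≥ 2, and let φ : ℝ → ℝ be a classification-calibrated margin loss. For every class-posterior vector η ∈ ℝ^K and every g* ∈ ℝ^K minimizing W(·; η) over ℝ^K, at most one coordinate of g* is strictly positive; in particular, the conflict condition (existence of distinct classes y ≠ y' with g*_y > 0 and g*_{y'} > 0) cannot occur at a conditional minimizer. -/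
open Classical

/-!
Expanding `W` and using `∑ η = 1`, the conditional risk separates into independent
one-dimensional problems: coordinate `y` minimizes `c η_y φ(t) + (1 - c)(1 - η_y) φ(-t)`.
Normalized, this is the binary `φ`-risk at posterior `p = c η_y / (c η_y + (1 - c)(1 - η_y))`,
and calibration forbids a positive minimizer when `p < 1/2`, i.e. when `η_y < 1 - c`.
So every positive coordinate carries posterior mass at least `1 - c > 1/2`, and two of them
cannot coexist.
-/

open Finset

def weightedRisk (φ : ℝ → ℝ) (a b t : ℝ) : ℝ :=
  a * φ t + b * φ (-t)

lemma Wrisk_eq_sum_weightedRisk (φ : ℝ → ℝ) (c : ℝ) {K : ℕ} (g η : Fin K → ℝ)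
    (hη1 : ∑ y, η y = 1) :
    Wrisk φ c g η = ∑ y, weightedRisk φ (c * η y) ((1 - c) * (1 - η y)) (g y) := by
  set S := ∑ y', φ (-g y')
  have hsplit : ∀ y, η y * LCS φ c g y =
      (c * η y * φ (g y) - (1 - c) * η y * φ (-g y)) + (1 - c) * S * η y := by
    intro y
    rw [LCS, sum_erase_eq_sub (mem_univ y)]
    ring
  calc Wrisk φ c g η
      = ∑ y, (c * η y * φ (g y) - (1 - c) * η y * φ (-g y)) + (1 - c) * S := by
        rw [Wrisk, sum_congr rfl fun y _ => hsplit y, sum_add_distrib, ← mul_sum, hη1, mul_one]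
    _ = ∑ y, weightedRisk φ (c * η y) ((1 - c) * (1 - η y)) (g y) := by
        rw [mul_sum, ← sum_add_distrib]
        exact sum_congr rfl fun y _ => by simp only [weightedRisk]; ring

lemma apply_le_apply_of_forall_sum_le_s6 {ι : Type*} [Fintype ι] [DecidableEq ι]
    (f : ι → ℝ → ℝ) (g₀ : ι → ℝ) (hmin : ∀ g : ι → ℝ, ∑ i, f i (g₀ i) ≤ ∑ i, f i (g i))
    (i : ι) (t : ℝ) : f i (g₀ i) ≤ f i t := by
  have hrest : ∑ j ∈ univ.erase i, f j (Function.update g₀ i t j) =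
      ∑ j ∈ univ.erase i, f j (g₀ j) :=
    sum_congr rfl fun j hj => by rw [Function.update_of_ne (ne_of_mem_erase hj)]
  have h := hmin (Function.update g₀ i t)
  rw [← add_sum_erase _ _ (mem_univ i), ← add_sum_erase _ _ (mem_univ i), hrest,
    Function.update_self] at h
  linarith

lemma ClassificationCalibrated.exists_weightedRisk_one_sub_lt {φ : ℝ → ℝ} (hφ : ClassificationCalibrated φ)
    {p : ℝ} (hp0 : 0 ≤ p) (hp : p < 1 / 2) {v : ℝ} (hv : 0 < v) :
    ∃ w, weightedRisk φ p (1 - p) w < weightedRisk φ p (1 - p) v := by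
  set S := {r : ℝ | ∃ w : ℝ, r = p * φ w + (1 - p) * φ (-w)}
  set S' := {r : ℝ | ∃ w : ℝ, w * (2 * p - 1) ≤ 0 ∧ r = p * φ w + (1 - p) * φ (-w)}
  have hsub : S' ⊆ S := fun r ⟨w, _, hw⟩ => ⟨w, hw⟩
  have hvS' : weightedRisk φ p (1 - p) v ∈ S' := ⟨v, by nlinarith, rfl⟩
  suffices ∃ s ∈ S, s < weightedRisk φ p (1 - p) v by
    obtain ⟨_, ⟨w, rfl⟩, hw⟩ := this
    exact ⟨w, hw⟩
  by_cases hbdd : BddBelow S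
  · refine exists_lt_of_csInf_lt ⟨_, hsub hvS'⟩ ?_
    exact (hφ p hp0 (by linarith) hp.ne).trans_le (csInf_le (hbdd.mono hsub) hvS')
  · exact not_bddBelow_iff.mp hbdd _

lemma ClassificationCalibrated.exists_weightedRisk_lt {φ : ℝ → ℝ}
    (hφ : ClassificationCalibrated φ) {a b : ℝ} (ha : 0 ≤ a) (hab : a < b) {v : ℝ}
    (hv : 0 < v) : ∃ w, weightedRisk φ a b w < weightedRisk φ a b v := by
  have hA : 0 < a + b := by linarith
  have hscale : ∀ t, weightedRisk φ a b t =
      (a + b) * weightedRisk φ (a / (a + b)) (1 - a / (a + b)) t := by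
    intro t
    simp only [weightedRisk]
    field_simp
    ring
  obtain ⟨w, hw⟩ := hφ.exists_weightedRisk_one_sub_lt (div_nonneg ha hA.le)
    (by rw [div_lt_iff₀ hA]; linarith) hv
  exact ⟨w, by rw [hscale, hscale]; exact mul_lt_mul_of_pos_left hw hA⟩

lemma one_sub_le_of_isMin_Wrisk_of_pos {c : ℝ} (hc0 : 0 < c) {K : ℕ}
    {φ : ℝ → ℝ} (hφ : ClassificationCalibrated φ) {η : Fin K → ℝ} (hη0 : ∀ y, 0 ≤ η y)
    (hη1 : ∑ y, η y = 1) {gstar : Fin K → ℝ}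
    (hmin : ∀ g : Fin K → ℝ, Wrisk φ c gstar η ≤ Wrisk φ c g η) {y : Fin K}
    (hy : 0 < gstar y) : 1 - c ≤ η y := by
  by_contra! hlt
  have hcoord : ∀ t, weightedRisk φ (c * η y) ((1 - c) * (1 - η y)) (gstar y) ≤
      weightedRisk φ (c * η y) ((1 - c) * (1 - η y)) t := by
    refine apply_le_apply_of_forall_sum_le_s6
      (fun z => weightedRisk φ (c * η z) ((1 - c) * (1 - η z))) gstar (fun g => ?_) y
    simpa only [Wrisk_eq_sum_weightedRisk φ c _ η hη1] using hmin g
  obtain ⟨w, hw⟩ := hφ.exists_weightedRisk_lt (b := (1 - c) * (1 - η y))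
    (mul_nonneg hc0.le (hη0 y)) (by nlinarith [hη0 y]) hy
  exact (hcoord w).not_gt hw

theorem stmt6_general (c : ℝ) (hc0 : 0 < c) (hc : c < 1/2) (K : ℕ)
    (φ : ℝ → ℝ) (hφ : ClassificationCalibrated φ)
    (η : Fin K → ℝ) (hη0 : ∀ y, 0 ≤ η y) (hη1 : ∑ y, η y = 1)
    (gstar : Fin K → ℝ) (hmin : ∀ g : Fin K → ℝ, Wrisk φ c gstar η ≤ Wrisk φ c g η) :
    (∀ y y' : Fin K, 0 < gstar y → 0 < gstar y' → y = y') ∧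
    ¬ (∃ y y' : Fin K, y ≠ y' ∧ 0 < gstar y ∧ 0 < gstar y') := by
  have hunique : ∀ y y' : Fin K, 0 < gstar y → 0 < gstar y' → y = y' := by
    intro y y' hy hy'
    by_contra hne
    have hpair : η y + η y' ≤ 1 := by
      rw [← sum_pair hne, ← hη1]
      exact sum_le_sum_of_subset_of_nonneg (subset_univ _) fun z _ _ => hη0 z
    linarith [one_sub_le_of_isMin_Wrisk_of_pos hc0 hφ hη0 hη1 hmin hy,
      one_sub_le_of_isMin_Wrisk_of_pos hc0 hφ hη0 hη1 hmin hy']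
  exact ⟨hunique, fun ⟨y, y', hne, hy, hy'⟩ => hne (hunique y y' hy hy')⟩

/-- If `φ` is classification-calibrated, then every minimizer `g*` of the pointwise
conditional surrogate risk `W(·; η)` has at most one strictly positive coordinate;
in particular, the conflict condition cannot occur at a conditional minimizer. -/
theorem stmt6 (c : ℝ) (hc0 : 0 < c) (hc : c < 1/2) (K : ℕ) (hK : 2 ≤ K)
    (φ : ℝ → ℝ) (hφ : ClassificationCalibrated φ)
    (η : Fin K → ℝ) (hη0 : ∀ y, 0 ≤ η y) (hη1 : ∑ y, η y = 1)
    (gstar : Fin K → ℝ) (hmin : ∀ g : Fin K → ℝ, Wrisk φ c gstar η ≤ Wrisk φ c g η) :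
    (∀ y y' : Fin K, 0 < gstar y → 0 < gstar y' → y = y') ∧
    ¬ (∃ y y' : Fin K, y ≠ y' ∧ 0 < gstar y ∧ 0 < gstar y') :=
  stmt6_general c hc0 hc K φ hφ η hη0 hη1 gstar hmin
end

section
/- (Cost-sensitive hinge conditional regret bound, ψ equals identity for the hinge loss.) Let c ∈ (0, 1/2) and η ∈ [0,1]. Define the conditional cost-sensitive zero-one risk A(v) = c·η·1[v ≤ 0] + (1−c)·(1−η)·1[v > 0] and the conditional cost-sensitive hinge risk B(v) = c·η·max(0, 1 − v) + (1−c)·(1−η)·max(0, 1 + v) for v ∈ ℝ. Then inf_{u ∈ ℝ} A(u) = min(c·η, (1−c)·(1−η)), inf_{u ∈ ℝ} B(u) = 2·min(c·η, (1−c)·(1−η)), and for every v ∈ ℝ: A(v) − inf_{u ∈ ℝ} A(u) ≤ B(v) − inf_{u ∈ ℝ} B(u). -/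
/-!
With `a = c·η` and `b = (1−c)(1−η)`, the zero-one risk takes only the values `a` (for `v ≤ 0`)
and `b` (for `v > 0`), while the hinge risk dominates `a(1−v) + b(1+v)` and both single terms;
it attains `2·min(a, b)` at `v = ∓1`. For `v ≤ 0` the regret inequality reduces to
`a(−v) + b·max(0, 1+v) ≥ min(a, b)`, a convex combination of `a` and `b` when `−1 ≤ v`
and at least `a` otherwise; `v > 0` is symmetric.
-/

open Set

section CostSensitiveRisk

variable {a b : ℝ}

noncomputable def costZeroOneRisk (a b v : ℝ) : ℝ :=
  a * (if v ≤ 0 then 1 else 0) + b * (if 0 < v then 1 else 0)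

noncomputable def costHingeRisk (a b v : ℝ) : ℝ :=
  a * max 0 (1 - v) + b * max 0 (1 + v)

theorem costZeroOneRisk_eq_ite (a b v : ℝ) :
    costZeroOneRisk a b v = if v ≤ 0 then a else b := by
  by_cases hv : v ≤ 0
  · simp [costZeroOneRisk, hv, not_lt.mpr hv]
  · simp [costZeroOneRisk, hv, not_le.mp hv]

theorem range_costZeroOneRisk (a b : ℝ) : range (costZeroOneRisk a b) = {a, b} := by
  ext x
  simp only [mem_range, costZeroOneRisk_eq_ite, mem_insert_iff, mem_singleton_iff]
  constructor
  · rintro ⟨v, rfl⟩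
    split_ifs <;> simp
  · rintro (rfl | rfl)
    · exact ⟨0, by simp⟩
    · exact ⟨1, by simp⟩

theorem sInf_range_costZeroOneRisk (a b : ℝ) :
    sInf (range (costZeroOneRisk a b)) = min a b := by
  rw [range_costZeroOneRisk, csInf_pair]

theorem two_mul_min_le_costHingeRisk (ha : 0 ≤ a) (hb : 0 ≤ b) (v : ℝ) :
    2 * min a b ≤ costHingeRisk a b v := by
  have hp : 1 - v ≤ max 0 (1 - v) := le_max_right _ _
  have hq : 1 + v ≤ max 0 (1 + v) := le_max_right _ _
  have hp0 : 0 ≤ max 0 (1 - v) := le_max_left _ _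
  have hq0 : 0 ≤ max 0 (1 + v) := le_max_left _ _
  unfold costHingeRisk
  rcases le_total a b with h | h
  · rw [min_eq_left h]; nlinarith
  · rw [min_eq_right h]; nlinarith

theorem costHingeRisk_mem_two_mul_min (a b : ℝ) :
    2 * min a b ∈ range (costHingeRisk a b) := by
  rcases le_total a b with h | h
  · exact ⟨-1, by norm_num [costHingeRisk, min_eq_left h]; ring⟩
  · exact ⟨1, by norm_num [costHingeRisk, min_eq_right h]; ring⟩

theorem sInf_range_costHingeRisk (ha : 0 ≤ a) (hb : 0 ≤ b) :
    sInf (range (costHingeRisk a b)) = 2 * min a b :=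
  IsLeast.csInf_eq ⟨costHingeRisk_mem_two_mul_min a b,
    by rintro _ ⟨v, rfl⟩; exact two_mul_min_le_costHingeRisk ha hb v⟩

theorem costZeroOneRisk_sub_min_le (ha : 0 ≤ a) (hb : 0 ≤ b) (v : ℝ) :
    costZeroOneRisk a b v - min a b ≤ costHingeRisk a b v - 2 * min a b := by
  have hp : 1 - v ≤ max 0 (1 - v) := le_max_right _ _
  have hq : 1 + v ≤ max 0 (1 + v) := le_max_right _ _
  have hp0 : 0 ≤ max 0 (1 - v) := le_max_left _ _
  have hq0 : 0 ≤ max 0 (1 + v) := le_max_left _ _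
  rw [costZeroOneRisk_eq_ite]
  unfold costHingeRisk
  split_ifs with hv
  · rcases le_total v (-1) with h1 | h1 <;> rcases le_total a b with h | h <;>
      simp only [min_eq_left, min_eq_right, h] <;> nlinarith
  · rcases le_total 1 v with h1 | h1 <;> rcases le_total a b with h | h <;>
      simp only [min_eq_left, min_eq_right, h] <;> nlinarith

end CostSensitiveRisk

/-- (Cost-sensitive hinge conditional regret bound; ψ is the identity for the hinge
loss.) With `A(v) = c·η·1[v ≤ 0] + (1−c)·(1−η)·1[v > 0]` the conditional
cost-sensitive zero-one risk and `B(v) = c·η·max(0, 1−v) + (1−c)·(1−η)·max(0, 1+v)`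
the conditional cost-sensitive hinge risk: `inf A = min(c·η, (1−c)(1−η))`,
`inf B = 2·min(c·η, (1−c)(1−η))`, and the zero-one regret is bounded by the hinge
regret pointwise. -/
theorem stmt16 (c : ℝ) (hc0 : 0 < c) (hc : c < 1/2) (η : ℝ) (hη0 : 0 ≤ η) (hη1 : η ≤ 1) :
    let A : ℝ → ℝ := fun v =>
      c * η * (if v ≤ 0 then 1 else 0) + (1 - c) * (1 - η) * (if 0 < v then 1 else 0)
    let B : ℝ → ℝ := fun v =>
      c * η * max 0 (1 - v) + (1 - c) * (1 - η) * max 0 (1 + v)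
    sInf (Set.range A) = min (c * η) ((1 - c) * (1 - η)) ∧
    sInf (Set.range B) = 2 * min (c * η) ((1 - c) * (1 - η)) ∧
    ∀ v : ℝ, A v - sInf (Set.range A) ≤ B v - sInf (Set.range B) := by
  intro A B
  have hA : A = costZeroOneRisk (c * η) ((1 - c) * (1 - η)) := rfl
  have hB : B = costHingeRisk (c * η) ((1 - c) * (1 - η)) := rfl
  have ha : 0 ≤ c * η := mul_nonneg hc0.le hη0
  have hb : 0 ≤ (1 - c) * (1 - η) := mul_nonneg (by linarith) (by linarith)
  rw [hA, hB, sInf_range_costZeroOneRisk, sInf_range_costHingeRisk ha hb]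
  exact ⟨rfl, rfl, costZeroOneRisk_sub_min_le ha hb⟩
end

section
/- The sigmoid loss φ(z) = 1/(1 + e^z) is classification-calibrated: for every η ∈ [0,1] with η ≠ 1/2, inf{η·φ(v) + (1−η)·φ(−v) : v ∈ ℝ, v·(2η−1) ≤ 0} > inf{η·φ(v) + (1−η)·φ(−v) : v ∈ ℝ}. Concretely, for η > 1/2 the unrestricted infimum is 1 − η while the infimum over v ≤ 0 is 1/2, and symmetrically for η < 1/2. -/
/-- The sigmoid loss `φ(z) = 1 / (1 + e^z)`. -/
noncomputable def sigmoidLoss (z : ℝ) : ℝ := 1 / (1 + Real.exp z)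

/-!
For a symmetric loss (`φ z + φ (-z) = 1`) the conditional risk is affine in `φ v`:
`η φ(v) + (1 - η) φ(-v) = (1 - η) + (2η - 1) φ(v)`. If `φ` is antitone, then `φ v - 1/2` has the
sign of `-v`, so on the wrong-sign region the risk is at least its value `1/2` at `v = 0`. If
moreover `φ` takes exactly the values in `(0, 1)`, the unrestricted infimum is obtained by letting
`φ v` tend to `0` or to `1`, which gives `min η (1 - η) < 1/2` whenever `η ≠ 1/2`.
-/

open Set

noncomputable def condRisk (φ : ℝ → ℝ) (η v : ℝ) : ℝ := η * φ v + (1 - η) * φ (-v)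

section SymmetricLoss

variable {φ : ℝ → ℝ}

lemma condRisk_eq_of_symmetric (hsymm : ∀ z, φ z + φ (-z) = 1) (η v : ℝ) :
    condRisk φ η v = (1 - η) + (2 * η - 1) * φ v := by
  rw [condRisk, show φ (-v) = 1 - φ v by linarith [hsymm v]]
  ring

lemma sInf_condRisk_of_symmetric_of_range (hsymm : ∀ z, φ z + φ (-z) = 1)
    (hrange : range φ = Ioo 0 1) (η : ℝ) :
    sInf {r | ∃ v, r = condRisk φ η v} = min η (1 - η) := by
  set g : ℝ → ℝ := fun x ↦ (1 - η) + (2 * η - 1) * x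
  have hg : Continuous g := by fun_prop
  have hset : {r | ∃ v, r = condRisk φ η v} = g '' Ioo 0 1 := by
    rw [← hrange, ← range_comp]
    ext r
    simp [g, condRisk_eq_of_symmetric hsymm, eq_comm]
  rw [hset]
  rcases le_total 0 (2 * η - 1) with hd | hd
  · have hmono : Monotone g := fun _ _ hxy ↦ add_le_add_right (mul_le_mul_of_nonneg_left hxy hd) _
    rw [← hmono.map_csInf_of_continuousAt hg.continuousAt (nonempty_Ioo.2 zero_lt_one)
      bddBelow_Ioo, csInf_Ioo zero_lt_one]
    simp only [g]
    rw [min_eq_right (by linarith)]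
    ring
  · have hanti : Antitone g := fun _ _ hxy ↦ add_le_add_right (mul_le_mul_of_nonpos_left hxy hd) _
    rw [← hanti.map_csSup_of_continuousAt hg.continuousAt (nonempty_Ioo.2 zero_lt_one)
      bddAbove_Ioo, csSup_Ioo zero_lt_one]
    simp only [g]
    rw [min_eq_left (by linarith)]
    ring

lemma sInf_condRisk_wrong_sign_of_symmetric_of_antitone (hsymm : ∀ z, φ z + φ (-z) = 1)
    (hanti : Antitone φ) (η : ℝ) :
    sInf {r | ∃ v, v * (2 * η - 1) ≤ 0 ∧ r = condRisk φ η v} = 1 / 2 := by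
  have hzero : φ 0 = 1 / 2 := by
    have := hsymm 0
    rw [neg_zero] at this
    linarith
  refine IsLeast.csInf_eq ⟨⟨0, by simp, ?_⟩, ?_⟩
  · rw [condRisk_eq_of_symmetric hsymm, hzero]
    ring
  · rintro r ⟨v, hv, rfl⟩
    rw [condRisk_eq_of_symmetric hsymm]
    have hsign : 0 ≤ (2 * η - 1) * (φ v - 1 / 2) := by
      rcases lt_trichotomy v 0 with hv0 | rfl | hv0
      · exact mul_nonneg (nonneg_of_mul_nonpos_right hv hv0) (by linarith [hanti hv0.le])
      · rw [hzero, sub_self, mul_zero]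
      · exact mul_nonneg_of_nonpos_of_nonpos (nonpos_of_mul_nonpos_right hv hv0)
          (by linarith [hanti hv0.le])
    linarith

end SymmetricLoss

lemma sigmoidLoss_eq_sigmoid_neg (z : ℝ) : sigmoidLoss z = Real.sigmoid (-z) := by
  rw [sigmoidLoss, Real.sigmoid_def, neg_neg, one_div]

lemma sigmoidLoss_add_neg (z : ℝ) : sigmoidLoss z + sigmoidLoss (-z) = 1 := by
  rw [sigmoidLoss_eq_sigmoid_neg, sigmoidLoss_eq_sigmoid_neg, neg_neg, Real.sigmoid_neg]
  ring

lemma sigmoidLoss_antitone : Antitone sigmoidLoss := fun x y hxy ↦ by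
  rw [sigmoidLoss_eq_sigmoid_neg, sigmoidLoss_eq_sigmoid_neg]
  exact Real.sigmoid_monotone (neg_le_neg hxy)

lemma range_sigmoidLoss : range sigmoidLoss = Ioo 0 1 := by
  rw [show sigmoidLoss = Real.sigmoid ∘ Neg.neg from funext sigmoidLoss_eq_sigmoid_neg,
    neg_surjective.range_comp, Real.range_sigmoid]

/-- The sigmoid loss is classification-calibrated; concretely, for `η > 1/2` the
unrestricted infimum of the conditional sigmoid risk is `1 − η` while the infimum
over the constrained region (`v ≤ 0`) is `1/2`, and symmetrically for `η < 1/2`. -/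
theorem stmt18 :
    ClassificationCalibrated sigmoidLoss ∧
    (∀ η : ℝ, 1/2 < η → η ≤ 1 →
      sInf {r : ℝ | ∃ v : ℝ, r = η * sigmoidLoss v + (1 - η) * sigmoidLoss (-v)} =
        1 - η ∧
      sInf {r : ℝ | ∃ v : ℝ, v * (2 * η - 1) ≤ 0 ∧
          r = η * sigmoidLoss v + (1 - η) * sigmoidLoss (-v)} = 1/2) ∧
    (∀ η : ℝ, 0 ≤ η → η < 1/2 →
      sInf {r : ℝ | ∃ v : ℝ, r = η * sigmoidLoss v + (1 - η) * sigmoidLoss (-v)} =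
        η ∧
      sInf {r : ℝ | ∃ v : ℝ, v * (2 * η - 1) ≤ 0 ∧
          r = η * sigmoidLoss v + (1 - η) * sigmoidLoss (-v)} = 1/2) := by
  have hunc (η : ℝ) := sInf_condRisk_of_symmetric_of_range sigmoidLoss_add_neg range_sigmoidLoss η
  have hcon (η : ℝ) :=
    sInf_condRisk_wrong_sign_of_symmetric_of_antitone sigmoidLoss_add_neg sigmoidLoss_antitone η
  simp only [condRisk] at hunc hcon
  refine ⟨fun η _ _ hη ↦ ?_, fun η hη _ ↦ ⟨?_, hcon η⟩, fun η _ hη ↦ ⟨?_, hcon η⟩⟩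
  · rw [hunc, hcon, gt_iff_lt, min_lt_iff]
    rcases hη.lt_or_gt with h | h
    · exact Or.inl h
    · exact Or.inr (by linarith)
  · rw [hunc, min_eq_right (by linarith)]
  · rw [hunc, min_eq_left (by linarith)]
end
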